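/- For every odd n ≥ 3, the hom-poset 𝓗(C_n) with the involution ν(A,B) = (B,A) is a Z₂-poset, and there is an order-isomorphism from 𝓗(C_n) to the Z₂-crown of order n that commutes with the involutions. -/

import Mathlib

/-! ### The poset `Q₁` (face poset of the 1-dimensional cross-polytope) -/

/-- The four elements `+0, -0, +1, -1` of `Q₁`. -/
inductive Q1 : Type
  | p0 | m0 | p1 | m1
deriving DecidableEq

instance instFintypeQ1 : Fintype Q1 :=
  ⟨{.p0, .m0, .p1, .m1}, fun x => by cases x <;> decide⟩

/-- The level (`false` for `±0`, `true` for `±1`) of an element of `Q₁`. -/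
def Q1.lvl : Q1 → Bool
  | .p0 => false | .m0 => false | .p1 => true | .m1 => true

/-- The order on `Q₁`: `±0 < ±1` (all four strict relations). -/
instance : PartialOrder Q1 where
  le x y := x = y ∨ (x.lvl = false ∧ y.lvl = true)
  le_refl x := Or.inl rfl
  le_trans x y z hxy hyz := by
    rcases hxy with rfl | ⟨h1, h2⟩
    · exact hyz
    rcases hyz with rfl | ⟨h3, h4⟩
    · exact Or.inr ⟨h1, h2⟩
    · rw [h2] at h3; exact absurd h3 (by simp)
  le_antisymm x y hxy hyx := by
    rcases hxy with rfl | ⟨h1, h2⟩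
    · rfl
    rcases hyx with rfl | ⟨h3, h4⟩
    · rfl
    · rw [h2] at h3; exact absurd h3 (by simp)

/-- The involution of `Q₁`, swapping `+x` and `-x`. -/
def q1inv : Q1 → Q1
  | .p0 => .m0 | .m0 => .p0 | .p1 => .m1 | .m1 => .p1

/-! ### The `Z₂`-crown of order `n` -/

/-- The `Z₂`-crown of order `n` has element set `ZMod (4n)`. -/
abbrev Crown (n : ℕ) : Type := ZMod (4 * n)

instance (n : ℕ) [NeZero n] : NeZero (4 * n) := ⟨by have := NeZero.ne n; omega⟩

private lemma crown_parity {n : ℕ} [NeZero n] (x : ZMod (4 * n)) :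
    (x + 1).val % 2 = (x.val + 1) % 2 := by
  haveI : Fact (1 < 4 * n) := ⟨by have := NeZero.ne n; omega⟩
  rw [ZMod.val_add, ZMod.val_one, Nat.mod_mod_of_dvd _ ⟨2 * n, by ring⟩]

/-- The order on the crown, generated by `e < e + 1` and `e < e - 1` for even `e`. -/
instance crownPO (n : ℕ) [NeZero n] : PartialOrder (Crown n) where
  le x y := x = y ∨ (Even x.val ∧ (y = x + 1 ∨ y = x - 1))
  le_refl x := Or.inl rfl
  le_trans x y z hxy hyz := by
    rcases hxy with rfl | ⟨hex, hy⟩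
    · exact hyz
    rcases hyz with rfl | ⟨hey, hz⟩
    · exact Or.inr ⟨hex, hy⟩
    · exfalso
      rcases hy with rfl | rfl
      · have h := crown_parity x
        rw [Nat.even_iff] at hex hey; omega
      · have e : x - 1 + 1 = x := by ring
        have h := crown_parity (x - 1)
        rw [e] at h
        rw [Nat.even_iff] at hex hey; omega
  le_antisymm x y hxy hyx := by
    rcases hxy with rfl | ⟨hex, hy⟩
    · rfl
    rcases hyx with rfl | ⟨hey, hx⟩
    · rfl
    · exfalso
      rcases hy with rfl | rfl
      · have h := crown_parity x
        rw [Nat.even_iff] at hex hey; omega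
      · have e : x - 1 + 1 = x := by ring
        have h := crown_parity (x - 1)
        rw [e] at h
        rw [Nat.even_iff] at hex hey; omega

/-! ### The vector space `ZMod2^{P²}` with its strict order indicator -/

/-- Ordered pairs `(x,y)` with `x ≤ y` of a poset: the basis of `ZMod2^{P²}`. -/
abbrev OPairs (P : Type) [PartialOrder P] : Type := {p : P × P // p.1 ≤ p.2}

/-- The `ZMod 2`-vector space with basis the ordered pairs of `P`. -/
abbrev VS (P : Type) [PartialOrder P] := OPairs P →₀ ZMod 2

open scoped Classical in
/-- The strict order indicator: the sum of the basis elements `(x,y)` with `x < y`. -/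
noncomputable def soi (P : Type) [PartialOrder P] [Finite P] : VS P :=
  letI : Fintype (OPairs P) := Fintype.ofFinite _
  ∑ p : OPairs P, if p.val.1 < p.val.2 then Finsupp.single p 1 else 0

open scoped Classical in
/-- The sum of the basis elements `(x,y)` with `x < y` and `x, y ∈ S`. -/
noncomputable def soiOn {P : Type} [PartialOrder P] [Finite P] (S : Set P) : VS P :=
  letI : Fintype (OPairs P) := Fintype.ofFinite _
  ∑ p : OPairs P,
    if p.val.1 ∈ S ∧ p.val.2 ∈ S ∧ p.val.1 < p.val.2 then Finsupp.single p 1 else 0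

/-- The linear map `f̂` induced by a monotone map, sending the basis element `(x,y)`
to `(f x, f y)`. -/
noncomputable def fhat {P Q : Type} [PartialOrder P] [PartialOrder Q] {f : P → Q}
    (hf : Monotone f) : VS P →ₗ[ZMod 2] VS Q :=
  Finsupp.lmapDomain (ZMod 2) (ZMod 2) (fun p => ⟨(f p.val.1, f p.val.2), hf p.prop⟩)

/-- The cycle graph on `ZMod n` (`i` adjacent to `i ± 1`). -/
def cyc (n : ℕ) : SimpleGraph (ZMod n) := SimpleGraph.fromRel (fun i j => j = i + 1)
/-- The hom-poset `𝓗(H)`: pairs `(A,B)` of nonempty sets of vertices with every vertex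
of `A` adjacent to every vertex of `B`, ordered by coordinatewise inclusion. -/
def HomPt {V : Type} (H : SimpleGraph V) : Type :=
  {AB : Set V × Set V // AB.1.Nonempty ∧ AB.2.Nonempty ∧ ∀ a ∈ AB.1, ∀ b ∈ AB.2, H.Adj a b}

instance {V : Type} (H : SimpleGraph V) : PartialOrder (HomPt H) :=
  inferInstanceAs (PartialOrder
    {AB : Set V × Set V // AB.1.Nonempty ∧ AB.2.Nonempty ∧ ∀ a ∈ AB.1, ∀ b ∈ AB.2, H.Adj a b})

instance {V : Type} [Finite V] (H : SimpleGraph V) : Finite (HomPt H) :=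
  inferInstanceAs (Finite
    {AB : Set V × Set V // AB.1.Nonempty ∧ AB.2.Nonempty ∧ ∀ a ∈ AB.1, ∀ b ∈ AB.2, H.Adj a b})

/-- The eight-element subposet `ρ⁺` of `𝓗(H)` associated to a 4-cycle `(a,b,c,d)`. -/
def rhoP {V : Type} (H : SimpleGraph V) (a b c d : V) : Set (HomPt H) :=
  {X | X.val = ({a}, H.neighborSet a) ∨ X.val = (H.neighborSet b, {b}) ∨
       X.val = ({c}, H.neighborSet c) ∨ X.val = (H.neighborSet d, {d}) ∨
       X.val = ({a}, {b}) ∨ X.val = ({c}, {b}) ∨ X.val = ({c}, {d}) ∨ X.val = ({a}, {d})}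

/-- The thirteen-element subposet `D(ρ⁺)` of `𝓗(H)`, obtained from `ρ⁺` by adding five
further elements. -/
def DrhoP {V : Type} (H : SimpleGraph V) (a b c d : V) : Set (HomPt H) :=
  rhoP H a b c d ∪
    {X | X.val = ({a}, {b, d}) ∨ X.val = ({a, c}, {b}) ∨ X.val = ({c}, {b, d}) ∨
         X.val = ({a, c}, {d}) ∨ X.val = (({a, c} : Set V), ({b, d} : Set V))}

/-- The involution `ν(A,B) = (B,A)` of the hom-poset. -/
def nuH {V : Type} (H : SimpleGraph V) (X : HomPt H) : HomPt H :=
  ⟨(X.val.2, X.val.1), X.prop.2.1, X.prop.1, fun b hb a ha => (X.prop.2.2 a ha b hb).symm⟩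


/-! For odd `n` the Chinese remainder theorem `ZMod (2 * n) ≃ ZMod 2 × ZMod n` identifies
`C_{2n}` with the bipartite double cover of `C_n`. Splitting a set of vertices of `C_{2n}` into
its two sheets turns inclusion of sets into the order of `𝓗(C_n)`, and the elements of `𝓗(C_n)`
are exactly the images of the arcs `{m, m + 1}` and `{m, m + 1, m + 2}`. Sending the crown
element `2m + ε` (`ε ∈ {0, 1}`) to the arc `{m, …, m + 1 + ε}` is an order isomorphism onto these
arcs; adding `2n` shifts the arc by `n`, which exchanges the two sheets and so acts as `ν`. -/

section Arc

variable {N : ℕ}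

def ZMod.arc (m : ZMod N) (k : ℕ) : Set (ZMod N) := {j | ∃ i ≤ k, m + i = j}

open ZMod

lemma ZMod.mem_arc_add_iff {m c j : ZMod N} {k : ℕ} :
    j ∈ arc (m + c) k ↔ j - c ∈ arc m k := by
  simp [arc, eq_sub_iff_add_eq, add_right_comm]

lemma ZMod.arc_subset_arc_iff {m m' : ZMod N} {k k' : ℕ} (h : k + k' < N) :
    arc m k ⊆ arc m' k' ↔ ∃ i, i + k ≤ k' ∧ m' + i = m := by
  constructor
  · intro hsub
    obtain ⟨i₀, hi₀, e₀⟩ := hsub (⟨0, k.zero_le, by simp⟩ : m ∈ arc m k)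
    obtain ⟨i₁, hi₁, e₁⟩ := hsub ⟨k, le_rfl, rfl⟩
    have hcast : ((i₀ + k : ℕ) : ZMod N) = i₁ := by push_cast; linear_combination e₀ - e₁
    rw [natCast_eq_natCast_iff', Nat.mod_eq_of_lt (by omega), Nat.mod_eq_of_lt (by omega)]
      at hcast
    exact ⟨i₀, by omega, e₀⟩
  · rintro ⟨i, hi, rfl⟩ j ⟨i', hi', rfl⟩
    exact ⟨i + i', by omega, by push_cast; ring⟩

lemma ZMod.arc_one (m : ZMod N) : arc m 1 = {m, m + 1} := by
  ext j
  constructor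
  · rintro ⟨i, hi, rfl⟩
    interval_cases i <;> simp
  · rintro (rfl | rfl)
    exacts [⟨0, zero_le_one, by simp⟩, ⟨1, le_rfl, by simp⟩]

lemma ZMod.arc_two (m : ZMod N) : arc m 2 = {m, m + 1, m + 2} := by
  ext j
  constructor
  · rintro ⟨i, hi, rfl⟩
    interval_cases i <;> simp
  · rintro (rfl | rfl | rfl)
    exacts [⟨0, by omega, by simp⟩, ⟨1, by omega, by simp⟩, ⟨2, le_rfl, by simp⟩]

end Arc

namespace Crown

variable {n : ℕ}

def half (x : Crown n) : ZMod (2 * n) := (x.val / 2 : ℕ)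

def arc (x : Crown n) : Set (ZMod (2 * n)) := ZMod.arc (half x) (1 + x.val % 2)

lemma half_natCast (v : ℕ) : half (v : Crown n) = ((v / 2 : ℕ) : ZMod (2 * n)) := by
  rw [half, ZMod.val_natCast, show 4 * n = 2 * (2 * n) by ring, Nat.mod_mul_right_div_self,
    ZMod.natCast_mod]

lemma val_natCast_mod_two (v : ℕ) : (v : Crown n).val % 2 = v % 2 := by
  rw [ZMod.val_natCast, Nat.mod_mod_of_dvd _ ⟨2 * n, by ring⟩]

variable [NeZero n]

lemma half_add_natCast (x : Crown n) (k : ℕ) :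
    half (x + (k : Crown n)) = ((x.val + k) / 2 : ℕ) := by
  rw [← half_natCast, Nat.cast_add, ZMod.natCast_zmod_val]

lemma val_add_natCast_mod_two (x : Crown n) (k : ℕ) :
    (x + (k : Crown n)).val % 2 = (x.val + k) % 2 := by
  simpa only [Nat.cast_add, ZMod.natCast_zmod_val] using val_natCast_mod_two (n := n) (x.val + k)

lemma eq_of_half_eq {x y : Crown n} (h : half x = half y) (hp : x.val % 2 = y.val % 2) :
    x = y := by
  have hx := x.val_lt
  have hy := y.val_lt
  rw [half, half, ZMod.natCast_eq_natCast_iff', Nat.mod_eq_of_lt (by omega),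
    Nat.mod_eq_of_lt (by omega)] at h
  exact ZMod.val_injective _ (by omega)

lemma half_add_one_of_even {x : Crown n} (hx : x.val % 2 = 0) : half (x + 1) = half x := by
  rw [← Nat.cast_one, half_add_natCast, half, show (x.val + 1) / 2 = x.val / 2 by omega]

lemma half_add_one_of_odd {x : Crown n} (hx : x.val % 2 = 1) : half (x + 1) = half x + 1 := by
  rw [← Nat.cast_one, half_add_natCast, half, show (x.val + 1) / 2 = x.val / 2 + 1 by omega,
    Nat.cast_add_one]

lemma le_iff_exists_half {x y : Crown n} :
    x ≤ y ↔ ∃ i, i + x.val % 2 ≤ y.val % 2 ∧ half y + i = half x := by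
  have hpar (z : Crown n) : (z + 1).val % 2 = (z.val + 1) % 2 := by
    rw [← Nat.cast_one, val_add_natCast_mod_two]
  constructor
  · rintro (rfl | ⟨hx, rfl | rfl⟩)
    · exact ⟨0, by omega, by simp⟩
    · rw [Nat.even_iff] at hx
      exact ⟨0, by rw [hpar]; omega, by rw [half_add_one_of_even hx, Nat.cast_zero, add_zero]⟩
    · rw [Nat.even_iff] at hx
      have hodd : (x - 1).val % 2 = 1 := by
        have := hpar (x - 1)
        rw [sub_add_cancel] at this
        omega
      refine ⟨1, by omega, ?_⟩
      rw [Nat.cast_one, ← half_add_one_of_odd hodd, sub_add_cancel]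
  · rintro ⟨i, hi, he⟩
    rcases (show i = 0 ∧ x.val % 2 = y.val % 2 ∨
        x.val % 2 = 0 ∧ y.val % 2 = 1 ∧ (i = 0 ∨ i = 1) by omega) with
      ⟨rfl, hp⟩ | ⟨hx, hy, rfl | rfl⟩
    · exact Or.inl (eq_of_half_eq (by simpa using he.symm) hp)
    · refine Or.inr ⟨Nat.even_iff.mpr hx, Or.inl (eq_of_half_eq ?_ (by rw [hpar]; omega)).symm⟩
      rw [half_add_one_of_even hx, ← he, Nat.cast_zero, add_zero]
    · refine Or.inr ⟨Nat.even_iff.mpr hx, Or.inr (eq_sub_of_add_eq (eq_of_half_eq ?_ ?_))⟩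
      · rw [half_add_one_of_odd hy, ← he, Nat.cast_one]
      · rw [hpar]; omega

lemma le_iff_arc_subset (h3 : 3 ≤ n) {x y : Crown n} : x ≤ y ↔ x.arc ⊆ y.arc := by
  rw [le_iff_exists_half, arc, arc, ZMod.arc_subset_arc_iff (by omega)]
  exact exists_congr fun i => and_congr (by omega) Iff.rfl

lemma exists_arc_eq (m : ZMod (2 * n)) {k : ℕ} (hk₁ : 1 ≤ k) (hk₂ : k ≤ 2) :
    ∃ x : Crown n, x.arc = ZMod.arc m k := by
  refine ⟨((2 * m.val + (k - 1) : ℕ) : Crown n), ?_⟩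
  rw [arc, half_natCast, val_natCast_mod_two, show (2 * m.val + (k - 1)) / 2 = m.val by omega,
    ZMod.natCast_zmod_val, show 1 + (2 * m.val + (k - 1)) % 2 = k by omega]

lemma arc_add_two_mul (x : Crown n) :
    (x + ((2 * n : ℕ) : Crown n)).arc =
      ZMod.arc (half x + (n : ZMod (2 * n))) (1 + x.val % 2) := by
  rw [arc, half_add_natCast, val_add_natCast_mod_two,
    show (x.val + 2 * n) / 2 = x.val / 2 + n by omega, Nat.cast_add, Nat.add_mul_mod_self_left]
  rfl

end Crown

section HomPoset

variable {V : Type} (H : SimpleGraph V)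

lemma nuH_monotone : Monotone (nuH H) := fun _ _ h => ⟨h.2, h.1⟩

lemma nuH_nuH (X : HomPt H) : nuH H (nuH H X) = X := rfl

lemma nuH_ne (X : HomPt H) : nuH H X ≠ X := by
  intro h
  obtain ⟨a, ha⟩ := X.prop.1
  have hBA : X.val.2 = X.val.1 := congrArg (fun Y : HomPt H => Y.val.1) h
  exact H.loopless.irrefl a (X.prop.2.2 a ha a (hBA ▸ ha))

variable {H}

lemma HomPt.snd_subset_neighborSet (X : HomPt H) {a : V} (ha : a ∈ X.val.1) :
    X.val.2 ⊆ H.neighborSet a :=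
  fun b hb => X.prop.2.2 a ha b hb

lemma HomPt.fst_eq_singleton_or_snd_eq_singleton
    (hH : ∀ a a', a ≠ a' → (H.commonNeighbors a a').Subsingleton) (X : HomPt H) :
    (∃ a, X.val.1 = {a}) ∨ ∃ b, X.val.2 = {b} := by
  obtain ⟨a, ha⟩ := X.prop.1
  by_cases hA : ∀ a' ∈ X.val.1, a' = a
  · exact Or.inl ⟨a, Set.eq_singleton_iff_unique_mem.mpr ⟨ha, hA⟩⟩
  push Not at hA
  obtain ⟨a', ha', hne⟩ := hA
  obtain ⟨b, hb⟩ := X.prop.2.1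
  have hB : X.val.2 ⊆ H.commonNeighbors a' a := fun c hc =>
    ⟨X.snd_subset_neighborSet ha' hc, X.snd_subset_neighborSet ha hc⟩
  exact Or.inr ⟨b, Set.eq_singleton_iff_unique_mem.mpr
    ⟨hb, fun c hc => hH a' a hne (hB hc) (hB hb)⟩⟩

end HomPoset

section Cycle

variable {n : ℕ} [Fact (1 < n)]

lemma cyc_adj_iff {a b : ZMod n} : (cyc n).Adj a b ↔ b = a + 1 ∨ b = a - 1 := by
  rw [cyc, SimpleGraph.fromRel_adj, eq_sub_iff_add_eq, eq_comm (a := a)]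
  refine ⟨And.right, fun h => ⟨?_, h⟩⟩
  rintro rfl
  rcases h with h | h <;> simp at h

lemma cyc_neighborSet (a : ZMod n) : (cyc n).neighborSet a = {a + 1, a - 1} :=
  Set.ext fun _ => cyc_adj_iff

lemma cyc_commonNeighbors_subsingleton (h4 : (4 : ZMod n) ≠ 0) {a a' : ZMod n} (h : a ≠ a') :
    ((cyc n).commonNeighbors a a').Subsingleton := by
  rintro b ⟨hb, hb'⟩ c ⟨hc, hc'⟩
  simp only [SimpleGraph.mem_neighborSet, cyc_adj_iff] at hb hb' hc hc'
  grind

lemma ZMod.four_ne_zero_of_odd (hn : Odd n) : (4 : ZMod n) ≠ 0 := by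
  have h2 : IsUnit (2 : ZMod n) := by
    simpa using (ZMod.unitOfCoprime 2 (Nat.coprime_two_left.mpr hn)).isUnit
  exact (show (4 : ZMod n) = 2 * 2 by norm_num) ▸ (h2.mul h2).ne_zero

end Cycle

section DoubleCover

variable {n : ℕ} (hn : Odd n)

def doubleCover : ZMod (2 * n) ≃+* ZMod 2 × ZMod n :=
  ZMod.chineseRemainder (Nat.coprime_two_left.mpr hn)

def side (p : ZMod 2) (S : Set (ZMod (2 * n))) : Set (ZMod n) :=
  {a | (doubleCover hn).symm (p, a) ∈ S}

def sides (S : Set (ZMod (2 * n))) : Set (ZMod n) × Set (ZMod n) := (side hn 0 S, side hn 1 S)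

lemma doubleCover_symm_add_one (p : ZMod 2) (a : ZMod n) :
    (doubleCover hn).symm (p, a) + 1 = (doubleCover hn).symm (p + 1, a + 1) := by
  apply (doubleCover hn).injective
  ext <;> simp

lemma doubleCover_symm_sub_self (p : ZMod 2) (a : ZMod n) :
    (doubleCover hn).symm (p, a) - n = (doubleCover hn).symm (p + 1, a) := by
  apply (doubleCover hn).injective
  ext <;> simp [ZMod.natCast_eq_one_iff_odd.mpr hn, CharTwo.sub_eq_add]

lemma sides_le_sides_iff {S T : Set (ZMod (2 * n))} : sides hn S ≤ sides hn T ↔ S ⊆ T := by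
  refine ⟨fun h j hj => ?_, fun h => ⟨fun a ha => h ha, fun a ha => h ha⟩⟩
  obtain ⟨⟨p, a⟩, rfl⟩ := (doubleCover hn).symm.surjective j
  fin_cases p
  exacts [h.1 (show a ∈ side hn 0 S from hj), h.2 (show a ∈ side hn 1 S from hj)]

lemma sides_sub_preimage (S : Set (ZMod (2 * n))) :
    sides hn {j | j - n ∈ S} = (sides hn S).swap := by
  ext a <;> simp [sides, side, doubleCover_symm_sub_self, show (1 + 1 : ZMod 2) = 0 from rfl]

lemma sides_arc_add_self (m : ZMod (2 * n)) (k : ℕ) :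
    sides hn (ZMod.arc (m + n) k) = (sides hn (ZMod.arc m k)).swap := by
  rw [← sides_sub_preimage]
  congr 1
  ext j
  exact ZMod.mem_arc_add_iff

lemma sides_image_union (A B : Set (ZMod n)) :
    sides hn ((fun a => (doubleCover hn).symm (0, a)) '' A ∪
      (fun b => (doubleCover hn).symm (1, b)) '' B) = (A, B) := by
  ext a <;> simp [sides, side]

lemma side_arc_nonempty (p : ZMod 2) (m : ZMod (2 * n)) {k : ℕ} (hk : 1 ≤ k) :
    (side hn p (ZMod.arc m k)).Nonempty := by
  obtain ⟨⟨q, a⟩, rfl⟩ := (doubleCover hn).symm.surjective m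
  obtain rfl | rfl : p = q ∨ p = q + 1 := by revert p q; decide
  · exact ⟨a, 0, k.zero_le, by simp⟩
  · exact ⟨a + 1, 1, hk, by rw [Nat.cast_one, doubleCover_symm_add_one]⟩

variable [Fact (1 < n)]

lemma cyc_adj_of_mem_side_arc {p : ZMod 2} {m : ZMod (2 * n)} {k : ℕ} (hk : k ≤ 2)
    {a b : ZMod n} (ha : a ∈ side hn p (ZMod.arc m k))
    (hb : b ∈ side hn (p + 1) (ZMod.arc m k)) :
    (cyc n).Adj a b := by
  obtain ⟨i, hi, hai⟩ := ha
  obtain ⟨i', hi', hbi⟩ := hb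
  have h := congrArg (doubleCover hn) (show (doubleCover hn).symm (p + 1, b) -
    (doubleCover hn).symm (p, a) = (i' : ZMod (2 * n)) - i by rw [← hai, ← hbi]; ring)
  simp only [map_sub, RingEquiv.apply_symm_apply, map_natCast, Prod.mk_sub_mk, Prod.ext_iff,
    add_sub_cancel_left, Prod.fst_sub, Prod.snd_sub, Prod.fst_natCast, Prod.snd_natCast] at h
  obtain ⟨hparity, hdiff⟩ := h
  rw [cyc_adj_iff, (sub_eq_iff_eq_add').mp hdiff]
  have : i ≤ 2 := hi.trans hk
  have : i' ≤ 2 := hi'.trans hk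
  interval_cases i <;> interval_cases i' <;>
    first
      | exact absurd hparity (by decide)
      | (left; push_cast; ring1)
      | (right; push_cast; ring1)

lemma exists_arc_of_fst_eq_singleton (X : HomPt (cyc n)) {a : ZMod n} (hX : X.val.1 = {a}) :
    ∃ m k, 1 ≤ k ∧ k ≤ 2 ∧ X.val = sides hn (ZMod.arc m k) := by
  have hB : X.val.2 ⊆ {a + 1, a - 1} :=
    cyc_neighborSet a ▸ X.snd_subset_neighborSet (hX ▸ rfl : a ∈ X.val.1)
  set c := (doubleCover hn).symm (0, a)
  have hc₁ : c + 1 = (doubleCover hn).symm (1, a + 1) := by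
    rw [doubleCover_symm_add_one, zero_add]
  have hc₂ : c - 1 = (doubleCover hn).symm (1, a - 1) := by
    rw [sub_eq_iff_eq_add, doubleCover_symm_add_one, sub_add_cancel]; rfl
  rw [← Prod.mk.eta (p := X.val), ← sides_image_union hn X.val.1 X.val.2, hX]
  rcases X.prop.2.1.subset_pair_iff_eq.mp hB with hB | hB | hB <;> rw [hB] <;>
    simp only [Set.image_singleton, Set.image_pair, Set.singleton_union, ← hc₁, ← hc₂]
  · exact ⟨c, 1, le_rfl, one_le_two, by rw [ZMod.arc_one]⟩
  · exact ⟨c - 1, 1, le_rfl, one_le_two, by rw [ZMod.arc_one, sub_add_cancel, Set.pair_comm]⟩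
  · refine ⟨c - 1, 2, one_le_two, le_rfl, ?_⟩
    rw [ZMod.arc_two, sub_add_cancel, show c - 1 + 2 = c + 1 by ring]
    congr 1
    ext j
    simp only [Set.mem_insert_iff, Set.mem_singleton_iff]
    tauto

lemma exists_arc_eq_sides (X : HomPt (cyc n)) :
    ∃ m k, 1 ≤ k ∧ k ≤ 2 ∧ X.val = sides hn (ZMod.arc m k) := by
  rcases X.fst_eq_singleton_or_snd_eq_singleton
      (fun _ _ => cyc_commonNeighbors_subsingleton (ZMod.four_ne_zero_of_odd hn)) with
    ⟨a, ha⟩ | ⟨b, hb⟩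
  · exact exists_arc_of_fst_eq_singleton hn X ha
  · obtain ⟨m, k, hk₁, hk₂, h⟩ := exists_arc_of_fst_eq_singleton hn (nuH _ X) hb
    exact ⟨m + n, k, hk₁, hk₂, by rw [sides_arc_add_self, ← h]; rfl⟩

end DoubleCover

section CrownIso

variable {n : ℕ} (hn : Odd n) [NeZero n] [Fact (1 < n)]

def crownToHom (x : Crown n) : HomPt (cyc n) :=
  ⟨sides hn x.arc, side_arc_nonempty hn 0 _ (by omega), side_arc_nonempty hn 1 _ (by omega),
    fun _ ha _ hb => cyc_adj_of_mem_side_arc hn (p := 0) (by omega) ha (by rwa [zero_add])⟩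

lemma crownToHom_le_iff (h3 : 3 ≤ n) {x y : Crown n} :
    crownToHom hn x ≤ crownToHom hn y ↔ x ≤ y :=
  (sides_le_sides_iff hn).trans (Crown.le_iff_arc_subset h3).symm

lemma crownToHom_surjective : Function.Surjective (crownToHom hn (n := n)) := by
  intro X
  obtain ⟨m, k, hk₁, hk₂, hX⟩ := exists_arc_eq_sides hn X
  obtain ⟨x, hx⟩ := Crown.exists_arc_eq m hk₁ hk₂
  exact ⟨x, Subtype.ext (by rw [hX, ← hx]; rfl)⟩

lemma crownToHom_add_two_mul (x : Crown n) :
    crownToHom hn (x + ((2 * n : ℕ) : Crown n)) = nuH _ (crownToHom hn x) :=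
  Subtype.ext (show sides hn (x + _).arc = (sides hn x.arc).swap by
    rw [Crown.arc_add_two_mul, sides_arc_add_self]; rfl)

noncomputable def crownIsoHomPt (h3 : 3 ≤ n) : Crown n ≃o HomPt (cyc n) :=
  OrderIso.ofSurjective
    (OrderEmbedding.ofMapLEIff (crownToHom hn) fun _ _ => crownToHom_le_iff hn h3)
    (crownToHom_surjective hn)

end CrownIso

/-- For odd `n ≥ 3`, `(𝓗(C_n), ν)` is a `Z₂`-poset, order-isomorphic to
the `Z₂`-crown of order `n` by an isomorphism commuting with the involutions. -/
theorem homPoset_cycle_iso_crown (n : ℕ) [NeZero n] (hodd : Odd n) (h3 : 3 ≤ n) :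
    Monotone (nuH (cyc n)) ∧
    (∀ X : HomPt (cyc n), nuH (cyc n) (nuH (cyc n) X) = X) ∧
    (∀ X : HomPt (cyc n), nuH (cyc n) X ≠ X) ∧
    ∃ e : HomPt (cyc n) ≃o Crown n,
      ∀ X : HomPt (cyc n), e (nuH (cyc n) X) = e X + ((2 * n : ℕ) : Crown n) := by
  have : Fact (1 < n) := ⟨by omega⟩
  let e := crownIsoHomPt hodd h3
  refine ⟨nuH_monotone _, nuH_nuH _, nuH_ne _, e.symm, fun X => ?_⟩
  obtain ⟨x, rfl⟩ := e.surjective X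
  have hν : nuH (cyc n) (e x) = e (x + ((2 * n : ℕ) : Crown n)) :=
    (crownToHom_add_two_mul hodd x).symm
  rw [hν, e.symm_apply_apply, e.symm_apply_apply]
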